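/- arXiv:2010.12528 — 2 statements merged into one kernel-verified Lean document; each statement's English description precedes it below -/
import Mathlib

section
/- Let w be a walk from u to v in a graph. Then there exists a walk w′ from u to v whose list of edge entries is a permutation of the list of edge entries of w (in particular, w and w′ traverse each edge the same number of times, so they have equal length for any edge length function), and such that for every edge e, all occurrences of e in the edge list of w′, except possibly the last occurrence, form a single contiguous block that begins at the first occurrence of e in w′. -/
/-!
Common framework: metric multigraphs assembled from an edge set `E`
(`ends : E → Sym2 V` with distinct endpoints), walks, dynamic-point
systems, stabilization times, and structural graph notions.
-/

/-- Walks in a multigraph on vertices `V` with edge set `E` and endpoint map `ends`: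
an alternating sequence of vertices and edges. -/
inductive MGWalk {E V : Type} (ends : E → Sym2 V) : V → V → Type where
  | nil (a : V) : MGWalk ends a a
  | cons {a b c : V} (e : E) (h : ends e = s(a, b)) (tail : MGWalk ends b c) :
      MGWalk ends a c

namespace MGWalk

variable {E V : Type} {ends : E → Sym2 V}

/-- Length of a walk with respect to an edge-length function. -/
def length (l : E → ℝ) : ∀ {a b : V}, MGWalk ends a b → ℝ
  | _, _, nil _ => 0
  | _, _, cons e _ tail => l e + tail.length l

/-- The list of edge entries of a walk. -/
def edges : ∀ {a b : V}, MGWalk ends a b → List E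
  | _, _, nil _ => []
  | _, _, cons e _ tail => e :: tail.edges

end MGWalk

/-- A DP-system on a metric graph assembled from `E`: the vertex set is finite,
no edge is a loop, the multigraph is connected, and the set of initial vertices
is nonempty. -/
def IsDPSystem {E V : Type} (ends : E → Sym2 V) (S : Set V) : Prop :=
  Finite V ∧ (∀ e, ¬ (ends e).IsDiag) ∧ (∀ a b : V, Nonempty (MGWalk ends a b)) ∧
    S.Nonempty

/-- A dynamic point is present at time `t` at distance `s` from endpoint `x` of
edge `e` (on the arc leaving `x`) iff some walk from an initial vertex to `x`
has length `t - s`. -/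
def IsPoint {E V : Type} (ends : E → Sym2 V) (l : E → ℝ) (S : Set V)
    (t : ℝ) (e : E) (x : V) (s : ℝ) : Prop :=
  x ∈ ends e ∧ 0 ≤ s ∧ s < l e ∧
    ∃ v₀ ∈ S, ∃ w : MGWalk ends v₀ x, w.length l = t - s

/-- Number of dynamic points on edge `e` at time `t`. -/
noncomputable def NptsEdge {E V : Type} (ends : E → Sym2 V) (l : E → ℝ)
    (S : Set V) (e : E) (t : ℝ) : ℕ :=
  Set.ncard {p : V × ℝ | IsPoint ends l S t e p.1 p.2}

/-- Total number of dynamic points at time `t`. -/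
noncomputable def Npts {E V : Type} (ends : E → Sym2 V) (l : E → ℝ)
    (S : Set V) (t : ℝ) : ℕ :=
  Set.ncard {p : E × V × ℝ | IsPoint ends l S t p.1 p.2.1 p.2.2}

/-- `T` is a stabilization bound: `T ≥ 0` and the total number of points is
constant from `T` on. -/
def IsStabBound {E V : Type} (ends : E → Sym2 V) (l : E → ℝ) (S : Set V)
    (T : ℝ) : Prop :=
  0 ≤ T ∧ ∀ t ≥ T, Npts ends l S t = Npts ends l S T

/-- The stabilization time: the least stabilization bound. -/
noncomputable def stabTime {E V : Type} (ends : E → Sym2 V) (l : E → ℝ)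
    (S : Set V) : ℝ :=
  sInf {T : ℝ | IsStabBound ends l S T}

/-- `T` is a stabilization bound for edge `e`. -/
def IsEdgeStabBound {E V : Type} (ends : E → Sym2 V) (l : E → ℝ) (S : Set V)
    (e : E) (T : ℝ) : Prop :=
  0 ≤ T ∧ ∀ t ≥ T, NptsEdge ends l S e t = NptsEdge ends l S e T

/-- The stabilization time of edge `e`. -/
noncomputable def edgeStabTime {E V : Type} (ends : E → Sym2 V) (l : E → ℝ)
    (S : Set V) (e : E) : ℝ :=
  sInf {T : ℝ | IsEdgeStabBound ends l S e T}

/-- Membership in `LSTDP(E)` (given the underlying system is a DP-system):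
its stabilization time is maximal among all DP-systems assembled from `E`. -/
def IsMaxStab {E : Type} (l : E → ℝ) {V : Type} (ends : E → Sym2 V)
    (S : Set V) : Prop :=
  ∀ (V' : Type) (ends' : E → Sym2 V') (S' : Set V'),
    IsDPSystem ends' S' → stabTime ends' l S' ≤ stabTime ends l S

/-- Degree of vertex `x` in the subgraph with edge set `C`. -/
noncomputable def edgeDegree {E V : Type} (ends : E → Sym2 V) (C : Set E)
    (x : V) : ℕ :=
  Set.ncard {e ∈ C | x ∈ ends e}

/-- Degree of vertex `x` in the whole graph. -/
noncomputable def degree {E V : Type} (ends : E → Sym2 V) (x : V) : ℕ :=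
  Set.ncard {e : E | x ∈ ends e}

/-- `x` is a vertex of the subgraph with edge set `C`. -/
def OnEdgeSet {E V : Type} (ends : E → Sym2 V) (C : Set E) (x : V) : Prop :=
  ∃ e ∈ C, x ∈ ends e

/-- The subgraph with edge set `C` is connected. -/
def EdgeSetConn {E V : Type} (ends : E → Sym2 V) (C : Set E) : Prop :=
  ∀ a b : V, OnEdgeSet ends C a → OnEdgeSet ends C b →
    ∃ w : MGWalk ends a b, ∀ e ∈ w.edges, e ∈ C

/-- `C` is the edge set of a cycle: nonempty, connected, and every vertex of its
support has degree exactly two in it. -/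
def IsCycleSet {E V : Type} (ends : E → Sym2 V) (C : Set E) : Prop :=
  C.Nonempty ∧ EdgeSetConn ends C ∧
    ∀ x : V, OnEdgeSet ends C x → edgeDegree ends C x = 2

/-- A bead graph: no vertex lies on two distinct cycles. -/
def IsBead {E V : Type} (ends : E → Sym2 V) : Prop :=
  ∀ C₁ C₂ : Set E, IsCycleSet ends C₁ → IsCycleSet ends C₂ → C₁ ≠ C₂ →
    ∀ x : V, ¬ (OnEdgeSet ends C₁ x ∧ OnEdgeSet ends C₂ x)

/-- The graph has no cycles. -/
def IsAcyclicG {E V : Type} (ends : E → Sym2 V) : Prop :=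
  ∀ C : Set E, ¬ IsCycleSet ends C

/-- `H` is the edge set of a path subgraph: nonempty, connected, acyclic, and
all degrees within `H` are at most two. -/
def IsPathSet {E V : Type} (ends : E → Sym2 V) (H : Set E) : Prop :=
  H.Nonempty ∧ EdgeSetConn ends H ∧ (∀ C ⊆ H, ¬ IsCycleSet ends C) ∧
    ∀ x : V, edgeDegree ends H x ≤ 2

/-- `x` is a terminal vertex of the path subgraph `H`. -/
def IsHandleTerminal {E V : Type} (ends : E → Sym2 V) (H : Set E) (x : V) : Prop :=
  edgeDegree ends H x = 1

/-- The type `W(v, e)` of walks from `v` to an endpoint of edge `e`. -/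
def WalkTo {E V : Type} (ends : E → Sym2 V) (v : V) (e : E) : Type :=
  { p : Σ x : V, MGWalk ends v x // p.1 ∈ ends e }

/-- The relation `≈` on `W(v, e)`: walks with the same final endpoint are related
iff their lengths are congruent modulo `2·l(e)`; walks with different final
endpoints are related iff the difference of their lengths is congruent to
`l(e)` modulo `2·l(e)`. -/
def wapprox {E V : Type} (ends : E → Sym2 V) (l : E → ℝ) (v : V) (e : E)
    (w₁ w₂ : WalkTo ends v e) : Prop :=
  (w₁.1.1 = w₂.1.1 ∧
    ∃ k : ℤ, w₁.1.2.length l - w₂.1.2.length l = k * (2 * l e)) ∨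
  (w₁.1.1 ≠ w₂.1.1 ∧
    ∃ k : ℤ, w₁.1.2.length l - w₂.1.2.length l - l e = k * (2 * l e))


namespace MGWalk

variable {E V : Type} {ends : E → Sym2 V}

/-- Concatenation of walks. -/
def append : ∀ {a b c : V}, MGWalk ends a b → MGWalk ends b c → MGWalk ends a c
  | _, _, _, nil _, q => q
  | _, _, _, cons e h t, q => cons e h (t.append q)

@[simp] theorem edges_append : ∀ {a b c : V} (p : MGWalk ends a b) (q : MGWalk ends b c),
    (p.append q).edges = p.edges ++ q.edges
  | _, _, _, nil _, q => rfl
  | _, _, _, cons e h t, q => by simp [append, edges, edges_append t q]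

/-- Reversal of a walk. -/
def reverse : ∀ {a b : V}, MGWalk ends a b → MGWalk ends b a
  | _, _, nil a => nil a
  | _, _, cons e h t => t.reverse.append (cons e (h.trans (Sym2.eq_swap)) (nil _))

@[simp] theorem edges_reverse : ∀ {a b : V} (p : MGWalk ends a b),
    p.reverse.edges = p.edges.reverse
  | _, _, nil a => rfl
  | _, _, cons e h t => by simp [reverse, edges, edges_reverse t]

end MGWalk

/-- The "good" property of a list of edges. -/
def GoodList {E : Type} (L : List E) : Prop :=
  ∀ e : E, ∀ i k : ℕ, i < k →
    L[i]? = some e → L[k]? = some e →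
    (∃ m : ℕ, k < m ∧ L[m]? = some e) →
    ∀ j : ℕ, i ≤ j → j ≤ k → L[j]? = some e

theorem two_le_count_of_getElem {E : Type} [DecidableEq E] :
    ∀ (L : List E) (x : E) (a b : ℕ), a < b → L[a]? = some x → L[b]? = some x →
      2 ≤ L.count x := by
  intro L
  induction L with
  | nil => intro x a b _ ha _; simp at ha
  | cons c L' ih =>
    intro x a b hab ha hb
    match b, hab with
    | b' + 1, _ =>
      have hb' : L'[b']? = some x := by simpa using hb
      match a with
      | 0 =>
        have hc : c = x := by simpa using ha
        have h1 : 1 ≤ L'.count x := List.count_pos_iff.mpr (List.mem_of_getElem? hb')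
        have h2 : (c :: L').count x = L'.count x + 1 := by simp [hc]
        omega
      | a' + 1 =>
        have ha' : L'[a']? = some x := by simpa using ha
        have := ih x a' b' (by omega) ha' hb'
        have hle : L'.count x ≤ (c :: L').count x := by
          by_cases h : c = x <;> simp [List.count_cons, h]
        omega

theorem goodList_block {E : Type} [DecidableEq E] (L : List E) (e : E) (n : ℕ)
    (hL : GoodList L) (hc : L.count e ≤ 1) :
    GoodList (List.replicate n e ++ L) := by
  intro f i k hik hi hk hm j hij hjk
  have hget : ∀ q : ℕ, (List.replicate n e ++ L)[q]? =
      if q < n then some e else L[q - n]? := by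
    intro q
    rw [List.getElem?_append, List.length_replicate]
    by_cases h : q < n <;> simp [h, List.getElem?_replicate]
  by_cases hkn : k < n
  · have hf : f = e := by
      rw [hget k, if_pos hkn] at hk; exact (Option.some_inj.mp hk).symm
    rw [hget j, if_pos (by omega)]; rw [hf]
  · push_neg at hkn
    obtain ⟨m, hkm, hmval⟩ := hm
    have hkL : L[k - n]? = some f := by rw [hget k, if_neg (by omega)] at hk; exact hk
    have hmL : L[m - n]? = some f := by
      rw [hget m, if_neg (by omega)] at hmval; exact hmval
    by_cases hin : i < n
    · -- then f = e and L would contain e twice, contradiction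
      have hf : f = e := by
        rw [hget i, if_pos hin] at hi; exact (Option.some_inj.mp hi).symm
      have := two_le_count_of_getElem L f (k - n) (m - n) (by omega) hkL hmL
      rw [hf] at this; omega
    · push_neg at hin
      have hiL : L[i - n]? = some f := by rw [hget i, if_neg (by omega)] at hi; exact hi
      have := hL f (i - n) (k - n) (by omega) hiL hkL ⟨m - n, by omega, hmL⟩ (j - n)
        (by omega) (by omega)
      rw [hget j, if_neg (by omega)]; exact this

section Walks

variable {E V : Type} {ends : E → Sym2 V} [DecidableEq E]

open MGWalk

/-- Split a walk at the first occurrence of an edge `e`. -/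
theorem split_first (e : E) : ∀ {b v : V} (w : MGWalk ends b v),
    1 ≤ w.edges.count e →
    ∃ (x y : V) (P : MGWalk ends b x) (h : ends e = s(x, y)) (Q : MGWalk ends y v),
      P.edges.count e = 0 ∧ w.edges = P.edges ++ e :: Q.edges := by
  intro b v w
  induction w with
  | nil a => intro hcount; simp [MGWalk.edges] at hcount
  | @cons a b' c f hf t ih =>
    intro hcount
    by_cases hfe : f = e
    · subst hfe
      exact ⟨a, b', nil a, hf, t, by simp [MGWalk.edges], by simp [MGWalk.edges]⟩
    · have : 1 ≤ t.edges.count e := by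
        simpa [MGWalk.edges, List.count_cons, hfe] using hcount
      obtain ⟨x, y, P, h, Q, hP, hsplit⟩ := ih this
      exact ⟨x, y, cons f hf P, h, Q, by simp [MGWalk.edges, List.count_cons, hfe, hP],
        by simp [MGWalk.edges, hsplit]⟩

/-- Insert a closed walk based at an endpoint of `e` into a walk that traverses `e`. -/
theorem insert_closed (e : E) {b : V} (hb : b ∈ ends e) :
    ∀ {y v : V} (w : MGWalk ends y v), 1 ≤ w.edges.count e →
    ∀ (C : MGWalk ends b b),
      ∃ w₂ : MGWalk ends y v, w₂.edges.Perm (C.edges ++ w.edges) := by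
  intro y v w
  induction w with
  | nil a => intro hcount; simp [MGWalk.edges] at hcount
  | @cons a b' c f hf t ih =>
    intro hcount C
    by_cases hfe : f = e
    · subst hfe
      rw [hf] at hb
      rcases Sym2.mem_iff.mp hb with rfl | rfl
      · refine ⟨C.append (cons f hf t), ?_⟩
        simp only [MGWalk.edges, edges_append]
        exact List.Perm.refl _
      · refine ⟨cons f hf (C.append t), ?_⟩
        simp only [MGWalk.edges, edges_append]
        exact List.perm_middle.symm
    · have : 1 ≤ t.edges.count e := by
        simpa [MGWalk.edges, List.count_cons, hfe] using hcount
      obtain ⟨w₂, hperm⟩ := ih this C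
      refine ⟨cons f hf w₂, ?_⟩
      simp only [MGWalk.edges]
      exact (hperm.cons f).trans List.perm_middle.symm

/-- Extract all but one occurrence of `e` into a leading block. -/
theorem extract_block (e : E) : ∀ (n : ℕ) {b v : V} (w : MGWalk ends b v),
    w.edges.length ≤ n → b ∈ ends e → 1 ≤ w.edges.count e →
    ∃ (z : V) (pre : MGWalk ends b z) (rest : MGWalk ends z v),
      pre.edges = List.replicate (w.edges.count e - 1) e ∧
      rest.edges.count e = 1 ∧
      (pre.edges ++ rest.edges).Perm w.edges := by
  intro n
  induction n with
  | zero =>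
    intro b v w hlen hb hcount
    have : w.edges = [] := List.eq_nil_of_length_eq_zero (Nat.le_zero.mp hlen)
    rw [this] at hcount; simp at hcount
  | succ n ih =>
    intro b v w hlen hb hcount
    by_cases hc1 : w.edges.count e = 1
    · exact ⟨b, nil b, w, by simp [hc1, MGWalk.edges], hc1, by simp [MGWalk.edges]⟩
    · have hc2 : 2 ≤ w.edges.count e := by omega
      obtain ⟨x, y, P, h, Q, hPfree, hsplit⟩ := split_first e w hcount
      have hcw : w.edges.count e = P.edges.count e + (Q.edges.count e + 1) := by
        rw [hsplit]; simp [List.count_append, List.count_cons]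
      have hQc : 1 ≤ Q.edges.count e := by omega
      have hlenw : w.edges.length = P.edges.length + Q.edges.length + 1 := by
        rw [hsplit]; simp; omega
      have hbxy : b = x ∨ b = y := by rw [h] at hb; exact Sym2.mem_iff.mp hb
      -- construct w₁ : walk from the endpoint of e other than b, to v,
      -- with edges a permutation of P.edges ++ Q.edges
      rcases hbxy with rfl | rfl
      · -- b = x : P is a closed walk at b, Q starts at y
        obtain ⟨w₁, hw₁⟩ := insert_closed e hb Q hQc P
        have hy : y ∈ ends e := by rw [h]; exact Sym2.mem_mk_right _ _
        have hw₁c : w₁.edges.count e = w.edges.count e - 1 := by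
          rw [hw₁.count_eq]; simp [List.count_append]; omega
        have hw₁len : w₁.edges.length ≤ n := by
          have := hw₁.length_eq; simp [List.length_append] at this; omega
        obtain ⟨z, pre₁, rest, hpre₁, hrest, hperm⟩ := ih w₁ hw₁len hy
          (by rw [hw₁c]; omega)
        refine ⟨z, cons e h pre₁, rest, ?_, hrest, ?_⟩
        · show e :: pre₁.edges = _
          have hrep : List.replicate (w.edges.count e - 1) e
              = e :: List.replicate (w.edges.count e - 1 - 1) e := by
            rw [← List.replicate_succ]
            congr 1
            omega
          rw [hpre₁, hw₁c, hrep]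
        · show (e :: pre₁.edges ++ rest.edges).Perm w.edges
          have h1 : (pre₁.edges ++ rest.edges).Perm (P.edges ++ Q.edges) :=
            hperm.trans hw₁
          have h2 : (e :: (P.edges ++ Q.edges)).Perm w.edges := by
            rw [hsplit]; exact List.perm_middle.symm
          exact ((h1.cons e).trans h2)
      · -- b = y : P goes from b to x, Q starts at b
        have hx : x ∈ ends e := by rw [h]; exact Sym2.mem_mk_left _ _
        have h' : ends e = s(b, x) := h.trans Sym2.eq_swap
        set w₁ := P.reverse.append Q with hw₁def
        have hw₁ : w₁.edges.Perm (P.edges ++ Q.edges) := by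
          rw [hw₁def]; simp
          exact (P.edges.reverse_perm).append_right Q.edges
        have hw₁c : w₁.edges.count e = w.edges.count e - 1 := by
          rw [hw₁.count_eq]; simp [List.count_append]; omega
        have hw₁len : w₁.edges.length ≤ n := by
          have := hw₁.length_eq; simp [List.length_append] at this; omega
        obtain ⟨z, pre₁, rest, hpre₁, hrest, hperm⟩ := ih w₁ hw₁len hx
          (by rw [hw₁c]; omega)
        refine ⟨z, cons e h' pre₁, rest, ?_, hrest, ?_⟩
        · show e :: pre₁.edges = _
          have hrep : List.replicate (w.edges.count e - 1) e
              = e :: List.replicate (w.edges.count e - 1 - 1) e := by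
            rw [← List.replicate_succ]
            congr 1
            omega
          rw [hpre₁, hw₁c, hrep]
        · show (e :: pre₁.edges ++ rest.edges).Perm w.edges
          have h1 : (pre₁.edges ++ rest.edges).Perm (P.edges ++ Q.edges) :=
            hperm.trans hw₁
          have h2 : (e :: (P.edges ++ Q.edges)).Perm w.edges := by
            rw [hsplit]; exact List.perm_middle.symm
          exact ((h1.cons e).trans h2)

theorem main_good : ∀ (n : ℕ) {u v : V} (w : MGWalk ends u v), w.edges.length ≤ n →
    ∃ w' : MGWalk ends u v, w'.edges.Perm w.edges ∧ GoodList w'.edges := by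
  intro n
  induction n with
  | zero =>
    intro u v w hlen
    refine ⟨w, List.Perm.refl _, ?_⟩
    have : w.edges = [] := List.eq_nil_of_length_eq_zero (Nat.le_zero.mp hlen)
    rw [this]
    intro e i k hik hi
    simp at hi
  | succ n ih =>
    intro u v w hlen
    cases w with
    | nil _ =>
      refine ⟨nil u, List.Perm.refl _, ?_⟩
      intro e i k hik hi
      simp [MGWalk.edges] at hi
    | cons e h tail =>
      by_cases hc1 : (cons e h tail).edges.count e = 1
      · have htlen : tail.edges.length ≤ n := by
          have : (cons e h tail).edges.length = tail.edges.length + 1 := by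
            simp [MGWalk.edges]
          omega
        obtain ⟨tail', htperm, htgood⟩ := ih tail htlen
        refine ⟨cons e h tail', htperm.cons e, ?_⟩
        have hct : tail'.edges.count e = 0 := by
          rw [htperm.count_eq]
          have : (cons e h tail).edges.count e = tail.edges.count e + 1 := by
            simp [MGWalk.edges, List.count_cons]
          omega
        have : (cons e h tail').edges = List.replicate 1 e ++ tail'.edges := by
          simp [MGWalk.edges]
        rw [this]
        exact goodList_block _ e 1 htgood (by omega)
      · have hu : u ∈ ends e := by rw [h]; exact Sym2.mem_mk_left _ _
        have hcount : 1 ≤ (cons e h tail).edges.count e := by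
          simp [MGWalk.edges, List.count_cons]
        obtain ⟨z, pre, rest, hpre, hrest1, hperm⟩ :=
          extract_block e (n+1) (cons e h tail) hlen hu hcount
        have hrestlen : rest.edges.length ≤ n := by
          have h1 := hperm.length_eq
          have h2 : pre.edges.length = (cons e h tail).edges.count e - 1 := by
            rw [hpre]; simp
          simp [List.length_append] at h1
          omega
        obtain ⟨rest', hrperm, hrgood⟩ := ih rest hrestlen
        refine ⟨pre.append rest', ?_, ?_⟩
        · rw [edges_append]
          exact ((hrperm.append_left pre.edges).trans hperm)
        · rw [edges_append, hpre]
          refine goodList_block _ e _ hrgood ?_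
          rw [hrperm.count_eq, hrest1]


end Walks

/-- every walk can be reordered (keeping the same multiset of edge
entries, hence the same length) so that, for every edge `e`, all occurrences of
`e` except possibly the last one form a single contiguous block beginning at the
first occurrence of `e`. -/
theorem stmt7 {E V : Type} (ends : E → Sym2 V) (u v : V) (w : MGWalk ends u v) :
    ∃ w' : MGWalk ends u v,
      w'.edges.Perm w.edges ∧
      ∀ e : E, ∀ i k : ℕ, i < k →
        w'.edges[i]? = some e → w'.edges[k]? = some e →
        (∃ m : ℕ, k < m ∧ w'.edges[m]? = some e) →
        ∀ j : ℕ, i ≤ j → j ≤ k → w'.edges[j]? = some e := by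
  classical
  obtain ⟨w', hperm, hgood⟩ := main_good w.edges.length w le_rfl
  exact ⟨w', hperm, hgood⟩
end

section
/- Let Γ = (V, ends) be a metric graph assembled from a finite edge set E with positive real length function l, let e_0 ∈ E be an edge with v ∈ ends(e_0), and let Γ′ = (V ∪ {v′}, ends′) be obtained from Γ by adding a new vertex v′ and replacing the endpoint v of e_0 by v′ (ends′ agrees with ends on all other edges). Assume Γ′ is connected. Then identifying v′ with v maps every walk of Γ′ to a walk of Γ of equal length with the corresponding endpoints; consequently, for any set S ⊆ V of initial vertices, for every edge e ∈ E and every t ≥ 0, the number of dynamic points on e at time t in the DP-system on Γ′ with initial set S is at most the number of dynamic points on e at time t in the DP-system on Γ with initial set S. -/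
/-!
Collapsing the new vertex back onto `v` is a morphism `Γ′ → Γ` that fixes every edge, so it
maps walks to walks of the same length and dynamic points of `Γ′` to dynamic points of `Γ`.
Because `v ≠ u`, it is injective on the endpoints of each edge, hence on the dynamic points of
each edge. These are finitely many (edge lengths are bounded below, so only finitely many walk
lengths are `≤ t`), which matters since `Set.ncard` of an infinite set is `0`.
-/

namespace MGWalk

variable {E V V' : Type} {ends : E → Sym2 V} {ends' : E → Sym2 V'}

lemma length_eq_sum (l : E → ℝ) :
    ∀ {a b : V} (w : MGWalk ends a b), w.length l = (w.edges.map l).sum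
  | _, _, nil _ => rfl
  | _, _, cons e _ tail => by
      simp [length, edges, length_eq_sum l tail]

def map (f : V' → V) (hf : ∀ e, ends e = (ends' e).map f) :
    ∀ {a b : V'}, MGWalk ends' a b → MGWalk ends (f a) (f b)
  | _, _, nil a => nil (f a)
  | _, _, cons e he tail => cons e (by rw [hf, he, Sym2.map_mk]) (map f hf tail)

@[simp]
lemma length_map (f : V' → V) (hf : ∀ e, ends e = (ends' e).map f) (l : E → ℝ) :
    ∀ {a b : V'} (w : MGWalk ends' a b), (w.map f hf).length l = w.length l
  | _, _, nil _ => rfl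
  | _, _, cons e _ tail => by
      simp [map, length, length_map f hf l tail]

end MGWalk

lemma finite_setOf_sum_map_le {E : Type} [Finite E] {l : E → ℝ} (hl : ∀ e, 0 < l e)
    (t : ℝ) : {L : ℝ | ∃ es : List E, (es.map l).sum = L ∧ L ≤ t}.Finite := by
  obtain ⟨δ, hδ, hδl⟩ : ∃ δ > 0, ∀ e, δ ≤ l e := by
    rcases isEmpty_or_nonempty E with hE | hE
    · exact ⟨1, one_pos, isEmptyElim⟩
    · obtain ⟨e, he⟩ := Finite.exists_min l
      exact ⟨l e, hl e, he⟩
  refine ((List.finite_length_le E ⌈t / δ⌉₊).image fun es => (es.map l).sum).subset ?_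
  rintro _ ⟨es, rfl, hes⟩
  refine ⟨es, ?_, rfl⟩
  have hlen : es.length • δ ≤ (es.map l).sum := by
    simpa using List.card_nsmul_le_sum (es.map l) δ (List.forall_mem_map.2 fun e _ => hδl e)
  rw [nsmul_eq_mul] at hlen
  have : (es.length : ℝ) ≤ t / δ := by rw [le_div_iff₀ hδ]; linarith
  exact Nat.cast_le.mp (this.trans (Nat.le_ceil _))

section DynamicPoints

variable {E V V' : Type} {ends : E → Sym2 V} {ends' : E → Sym2 V'} {l : E → ℝ}

lemma finite_setOf_isPoint [Finite E] (hl : ∀ e, 0 < l e) (S : Set V) (e : E) (t : ℝ) :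
    {p : V × ℝ | IsPoint ends l S t e p.1 p.2}.Finite := by
  classical
  refine ((ends e).toFinset.finite_toSet.prod
    ((finite_setOf_sum_map_le hl t).image (t - ·))).subset ?_
  rintro ⟨x, s⟩ ⟨hx, hs, -, _, -, w, hw⟩
  refine ⟨by simpa using hx, w.length l, ⟨w.edges, (w.length_eq_sum l).symm, ?_⟩, ?_⟩ <;>
    simp only [hw] <;> linarith

lemma IsPoint.map (f : V' → V) (hf : ∀ e, ends e = (ends' e).map f) {S : Set V'} {t : ℝ}
    {e : E} {x : V'} {s : ℝ} (h : IsPoint ends' l S t e x s) :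
    IsPoint ends l (f '' S) t e (f x) s := by
  obtain ⟨hx, hs, hsl, v₀, hv₀, w, hw⟩ := h
  exact ⟨hf e ▸ Sym2.mem_map.mpr ⟨x, hx, rfl⟩, hs, hsl, f v₀, ⟨v₀, hv₀, rfl⟩, w.map f hf,
    by rw [MGWalk.length_map, hw]⟩

lemma nptsEdge_le_nptsEdge_image [Finite E] (hl : ∀ e, 0 < l e) (f : V' → V)
    (hf : ∀ e, ends e = (ends' e).map f) (S : Set V') (e : E)
    (hinj : Set.InjOn f {x | x ∈ ends' e}) (t : ℝ) :
    NptsEdge ends' l S e t ≤ NptsEdge ends l (f '' S) e t :=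
  Set.ncard_le_ncard_of_injOn (fun p => (f p.1, p.2)) (fun _ hp => hp.map f hf)
    ((hinj.prodMap (Set.injOn_id Set.univ)).mono fun p hp =>
      Set.mk_mem_prod hp.1 (Set.mem_univ p.2))
    (finite_setOf_isPoint hl (f '' S) e t)

end DynamicPoints

lemma Option.injOn_getD {α : Type*} {a : α} {s : Set (Option α)} (h : none ∈ s → some a ∉ s) :
    Set.InjOn (·.getD a) s := by
  rintro (_ | x) hx (_ | y) hy hxy
  · rfl
  · cases hxy; exact absurd hy (h hx)
  · cases hxy; exact absurd hx (h hy)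
  · cases hxy; rfl

section SplitVertex

variable {E V : Type} {ends : E → Sym2 V} {ends' : E → Sym2 (Option V)} {e₀ : E} {v u : V}

-- Identifying the new vertex `none` with `v` undoes the splitting.
lemma ends_eq_map_getD_of_split (he₀ : ends e₀ = s(v, u))
    (he₀' : ends' e₀ = s((none : Option V), some u))
    (hrest : ∀ e : E, e ≠ e₀ → ends' e = (ends e).map some) (e : E) :
    ends e = (ends' e).map (·.getD v) := by
  by_cases he : e = e₀
  · subst he
    simp [he₀, he₀']
  · simp [hrest e he, Sym2.map_map]

lemma injOn_getD_of_split (huv : v ≠ u) (he₀' : ends' e₀ = s((none : Option V), some u))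
    (hrest : ∀ e : E, e ≠ e₀ → ends' e = (ends e).map some) (e : E) :
    Set.InjOn (·.getD v) {x | x ∈ ends' e} := by
  refine Option.injOn_getD fun hnone hv => ?_
  obtain rfl : e = e₀ := by
    by_contra he
    simp [hrest e he] at hnone
  exact huv (by simpa [he₀'] using hv)

end SplitVertex

theorem stmt9_general {E : Type} [Fintype E] {V : Type}
    (ends : E → Sym2 V) (l : E → ℝ) (hl : ∀ e, 0 < l e)
    (hnd : ∀ e, ¬ (ends e).IsDiag)
    (e₀ : E) (v u : V) (he₀ : ends e₀ = s(v, u))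
    (ends' : E → Sym2 (Option V))
    (he₀' : ends' e₀ = s((none : Option V), some u))
    (hrest : ∀ e : E, e ≠ e₀ → ends' e = (ends e).map some) :
    (∀ (x y : Option V) (w' : MGWalk ends' x y),
      ∃ w : MGWalk ends (x.getD v) (y.getD v), w.length l = w'.length l) ∧
    ∀ S : Set V, S.Nonempty → ∀ (e : E) (t : ℝ), 0 ≤ t →
      NptsEdge ends' l (Option.some '' S) e t ≤ NptsEdge ends l S e t := by
  have hsplit := ends_eq_map_getD_of_split he₀ he₀' hrest
  have huv : v ≠ u := fun h => hnd e₀ (by simp [he₀, h])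
  refine ⟨fun x y w' => ⟨w'.map _ hsplit, w'.length_map _ hsplit l⟩, fun S _ e t _ => ?_⟩
  have hS : (·.getD v) '' (Option.some '' S) = S := by simp [Set.image_image]
  have h := nptsEdge_le_nptsEdge_image hl _ hsplit (Option.some '' S) e
    (injOn_getD_of_split huv he₀' hrest e) t
  rwa [hS] at h

/-- splitting an endpoint `v` of an edge `e₀` off to a new vertex
(the new vertex is `none : Option V`) maps, upon identifying the new vertex back
with `v`, every walk of the cut graph to a walk of the original graph of equal
length with the corresponding endpoints; consequently every edge carries at each
time `t ≥ 0` at most as many dynamic points in the cut system as in the original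
one (for any nonempty initial set `S ⊆ V`). -/
theorem stmt9 {E : Type} [Fintype E] {V : Type} [Finite V]
    (ends : E → Sym2 V) (l : E → ℝ) (hl : ∀ e, 0 < l e)
    (hnd : ∀ e, ¬ (ends e).IsDiag)
    (hconn : ∀ a b : V, Nonempty (MGWalk ends a b))
    (e₀ : E) (v u : V) (he₀ : ends e₀ = s(v, u))
    (ends' : E → Sym2 (Option V))
    (he₀' : ends' e₀ = s((none : Option V), some u))
    (hrest : ∀ e : E, e ≠ e₀ → ends' e = (ends e).map some)
    (hconn' : ∀ a b : Option V, Nonempty (MGWalk ends' a b)) :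
    (∀ (x y : Option V) (w' : MGWalk ends' x y),
      ∃ w : MGWalk ends (x.getD v) (y.getD v), w.length l = w'.length l) ∧
    ∀ S : Set V, S.Nonempty → ∀ (e : E) (t : ℝ), 0 ≤ t →
      NptsEdge ends' l (Option.some '' S) e t ≤ NptsEdge ends l S e t :=
  stmt9_general ends l hl hnd e₀ v u he₀ ends' he₀' hrest
end
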